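/- For any real N-by-P matrix X (N ≥ P) and any P-by-K matrix L with K ≤ P, the minimum over Z with Z^T Z = I_K of ||X - Z L^T||_F^2 equals tr(X^T X) + tr(L^T L) - 2||X L||_*, where ||·||_* is the nuclear norm. -/

import Mathlib

open Matrix

noncomputable def frobSq {n p : ℕ} (A : Matrix (Fin n) (Fin p) ℝ) : ℝ := ∑ i, ∑ j, (A i j)^2

open Classical in
/-- The unique positive semidefinite square root of a PSD matrix (junk value `0` otherwise). -/
noncomputable def msqrt {p : ℕ} (M : Matrix (Fin p) (Fin p) ℝ) : Matrix (Fin p) (Fin p) ℝ :=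
  if h : M.PosSemidef then
    h.1.eigenvectorUnitary.1 * diagonal ((RCLike.ofReal : ℝ → ℝ) ∘ Real.sqrt ∘ h.1.eigenvalues) *
      (star h.1.eigenvectorUnitary : Matrix (Fin p) (Fin p) ℝ)
  else 0

/-- Nuclear norm: sum of singular values, i.e. trace of the PSD square root of `Aᵀ * A`. -/
noncomputable def nuclearNorm {m n : ℕ} (A : Matrix (Fin m) (Fin n) ℝ) : ℝ :=
  (msqrt (A.transpose * A)).trace

/-!
For `Z` with orthonormal columns, `‖X - Z Lᵀ‖_F² = tr(XᵀX) + tr(LᵀL) - 2 tr(Zᵀ M)` with `M = X L`,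
so the theorem says that `tr(Zᵀ M)` is maximised at the nuclear norm of `M`. Diagonalise
`MᵀM = V diag(μ) Vᵀ` with `V` orthogonal: the columns of `M V` are orthogonal with squared norms
`μᵢ`, and `tr(Zᵀ M) = tr((Z V)ᵀ (M V))` is a sum of inner products of a unit vector with a vector of
norm `√μᵢ`, hence at most `∑ √μᵢ` by Cauchy–Schwarz. Equality holds for `Z = U Vᵀ`, where
`M V = U diag(√μ)` and `U` is obtained by normalising the nonzero columns of `M V` and completing
them to an orthonormal family, which is possible because `K ≤ N`.
-/

theorem Orthonormal.exists_orthonormal_extension_of_card_le {𝕜 E ι : Type*} [RCLike 𝕜]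
    [NormedAddCommGroup E] [InnerProductSpace 𝕜 E] [FiniteDimensional 𝕜 E] [Fintype ι]
    (hcard : Fintype.card ι ≤ Module.finrank 𝕜 E) {v : ι → E} {s : Set ι}
    (hv : Orthonormal 𝕜 (s.domRestrict v)) :
    ∃ u : ι → E, Orthonormal 𝕜 u ∧ ∀ i ∈ s, u i = v i := by
  classical
  let w : ι ⊕ Fin (Module.finrank 𝕜 E - Fintype.card ι) → E := Sum.elim v 0
  have hw : Orthonormal 𝕜 ((Sum.inl '' s).domRestrict w) := by
    rw [orthonormal_iff_ite]
    rintro ⟨_, i, hi, rfl⟩ ⟨_, j, hj, rfl⟩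
    simpa [w, Subtype.ext_iff] using orthonormal_iff_ite.mp hv ⟨i, hi⟩ ⟨j, hj⟩
  obtain ⟨b, hb⟩ := hw.exists_orthonormalBasis_extension_of_card_eq (by simp; omega)
  exact ⟨b ∘ Sum.inl, b.orthonormal.comp _ Sum.inl_injective, fun i hi => hb _ ⟨i, hi, rfl⟩⟩

namespace Matrix

variable {m n : Type*} [Fintype m]

theorem posSemidef_transpose_mul_self [Finite n] (M : Matrix m n ℝ) : (Mᵀ * M).PosSemidef := by
  simpa only [conjTranspose_eq_transpose_of_trivial] using posSemidef_conjTranspose_mul_self M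

theorem diag_transpose_mul_le_sqrt [DecidableEq n] {A B : Matrix m n ℝ} {d : n → ℝ}
    (hA : Aᵀ * A = 1) (hB : Bᵀ * B = diagonal d) (i : n) : (Aᵀ * B) i i ≤ √(d i) := by
  have hAi : ∑ a, A a i ^ 2 = 1 := by
    simpa [mul_apply, sq] using congrFun (congrFun hA i) i
  have hBi : ∑ a, B a i ^ 2 = d i := by
    simpa [mul_apply, sq] using congrFun (congrFun hB i) i
  have hcs := Finset.sum_mul_sq_le_sq_mul_sq Finset.univ (fun a => A a i) (fun a => B a i)
  rw [hAi, hBi, one_mul] at hcs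
  simpa only [mul_apply, transpose_apply] using Real.le_sqrt_of_sq_le hcs

variable [Fintype n] [DecidableEq n]

theorem trace_transpose_mul_le_sum_sqrt {A B : Matrix m n ℝ} {d : n → ℝ}
    (hA : Aᵀ * A = 1) (hB : Bᵀ * B = diagonal d) : (Aᵀ * B).trace ≤ ∑ i, √(d i) :=
  Finset.sum_le_sum fun i _ => diag_transpose_mul_le_sqrt hA hB i

theorem trace_transpose_mul_mul_of_mul_transpose_eq_one {V : Matrix n n ℝ} (hV : V * Vᵀ = 1)
    (Z M : Matrix m n ℝ) : ((Z * V)ᵀ * (M * V)).trace = (Zᵀ * M).trace := by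
  rw [transpose_mul, Matrix.mul_assoc, trace_mul_comm, Matrix.mul_assoc, Matrix.mul_assoc, hV,
    Matrix.mul_one, trace_mul_comm]

theorem exists_transpose_mul_self_eq_one_and_eq_mul_diagonal_sqrt
    (hcard : Fintype.card n ≤ Fintype.card m) {A : Matrix m n ℝ} {d : n → ℝ}
    (hA : Aᵀ * A = diagonal d) :
    ∃ U : Matrix m n ℝ, Uᵀ * U = 1 ∧ A = U * diagonal (fun i => √(d i)) := by
  let col : n → EuclideanSpace ℝ m := fun i => WithLp.toLp 2 (fun a => A a i)
  have hinner : ∀ i j, inner ℝ (col i) (col j) = diagonal d i j := by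
    intro i j
    rw [← hA, EuclideanSpace.inner_toLp_toLp]
    simp [mul_apply, dotProduct, mul_comm]
  have hd : ∀ i, 0 ≤ d i := fun i => by
    simpa only [hinner, diagonal_apply_eq] using real_inner_self_nonneg (x := col i)
  have hv : Orthonormal ℝ ({i | d i ≠ 0}.domRestrict fun i => (√(d i))⁻¹ • col i) := by
    rw [orthonormal_iff_ite]
    rintro ⟨i, hi⟩ ⟨j, hj⟩
    simp only [Set.domRestrict_apply, inner_smul_left, inner_smul_right, hinner]
    by_cases hij : i = j
    · subst hij
      have hdi : 0 < d i := lt_of_le_of_ne (hd i) (Ne.symm hi)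
      simp only [diagonal_apply_eq, conj_trivial, if_true]
      field_simp
      exact (Real.sq_sqrt hdi.le).symm
    · simp [hij]
  obtain ⟨u, hu, hu_eq⟩ := hv.exists_orthonormal_extension_of_card_le (by simpa using hcard)
  refine ⟨of fun a i => u i a, ?_, ?_⟩
  · ext i j
    have h := orthonormal_iff_ite.mp hu i j
    rw [EuclideanSpace.inner_eq_star_dotProduct] at h
    simpa [mul_apply, dotProduct, one_apply, mul_comm] using h
  · ext a i
    rw [mul_diagonal, of_apply]
    by_cases hi : d i = 0
    · have hcol : col i = 0 := inner_self_eq_zero.mp ((hinner i i).trans (by simp [hi]))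
      simpa [hi] using congrFun (congrArg WithLp.ofLp hcol) a
    · have hsqrt : √(d i) ≠ 0 := Real.sqrt_ne_zero'.mpr (lt_of_le_of_ne (hd i) (Ne.symm hi))
      simp [hu_eq i hi, col]
      field_simp

theorem IsHermitian.transpose_eigenvectorUnitary_mul_self {S : Matrix n n ℝ}
    (hS : S.IsHermitian) :
    (hS.eigenvectorUnitary : Matrix n n ℝ)ᵀ * hS.eigenvectorUnitary = 1 := by
  simpa [star_eq_conjTranspose] using mem_unitaryGroup_iff'.mp hS.eigenvectorUnitary.2

theorem IsHermitian.eigenvectorUnitary_mul_transpose {S : Matrix n n ℝ} (hS : S.IsHermitian) :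
    (hS.eigenvectorUnitary : Matrix n n ℝ) * (hS.eigenvectorUnitary : Matrix n n ℝ)ᵀ = 1 := by
  simpa [star_eq_conjTranspose] using mem_unitaryGroup_iff.mp hS.eigenvectorUnitary.2

theorem IsHermitian.transpose_eigenvectorUnitary_mul_mul {S : Matrix n n ℝ}
    (hS : S.IsHermitian) :
    (hS.eigenvectorUnitary : Matrix n n ℝ)ᵀ * S * hS.eigenvectorUnitary =
      diagonal hS.eigenvalues := by
  simpa [Unitary.conjStarAlgAut_star_apply, star_eq_conjTranspose, Function.comp_def]
    using hS.conjStarAlgAut_star_eigenvectorUnitary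

theorem transpose_mul_mul_eigenvectorUnitary (M : Matrix m n ℝ) (hS : (Mᵀ * M).IsHermitian) :
    (M * (hS.eigenvectorUnitary : Matrix n n ℝ))ᵀ * (M * (hS.eigenvectorUnitary : Matrix n n ℝ)) =
      diagonal hS.eigenvalues := by
  rw [← hS.transpose_eigenvectorUnitary_mul_mul, transpose_mul]
  simp only [Matrix.mul_assoc]

end Matrix

theorem nuclearNorm_eq_sum_sqrt_eigenvalues {m n : ℕ} (M : Matrix (Fin m) (Fin n) ℝ)
    (hS : (Mᵀ * M).IsHermitian) : nuclearNorm M = ∑ i, √(hS.eigenvalues i) := by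
  rw [nuclearNorm, msqrt, dif_pos (posSemidef_transpose_mul_self M), trace_mul_cycle,
    Unitary.coe_star_mul_self, Matrix.one_mul, trace_diagonal]
  rfl

theorem trace_transpose_mul_le_nuclearNorm {N K : ℕ} {Z : Matrix (Fin N) (Fin K) ℝ}
    (hZ : Zᵀ * Z = 1) (M : Matrix (Fin N) (Fin K) ℝ) : (Zᵀ * M).trace ≤ nuclearNorm M := by
  let hS := (posSemidef_transpose_mul_self M).1
  let V : Matrix (Fin K) (Fin K) ℝ := hS.eigenvectorUnitary
  have hZV : (Z * V)ᵀ * (Z * V) = 1 := by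
    rw [transpose_mul, Matrix.mul_assoc, ← Matrix.mul_assoc Zᵀ, hZ, Matrix.one_mul,
      hS.transpose_eigenvectorUnitary_mul_self]
  rw [nuclearNorm_eq_sum_sqrt_eigenvalues M hS,
    ← trace_transpose_mul_mul_of_mul_transpose_eq_one hS.eigenvectorUnitary_mul_transpose]
  exact trace_transpose_mul_le_sum_sqrt hZV (transpose_mul_mul_eigenvectorUnitary M hS)

theorem exists_trace_transpose_mul_eq_nuclearNorm {N K : ℕ} (hKN : K ≤ N)
    (M : Matrix (Fin N) (Fin K) ℝ) :
    ∃ Z₀ : Matrix (Fin N) (Fin K) ℝ, Z₀ᵀ * Z₀ = 1 ∧ (Z₀ᵀ * M).trace = nuclearNorm M := by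
  let hS := (posSemidef_transpose_mul_self M).1
  let V : Matrix (Fin K) (Fin K) ℝ := hS.eigenvectorUnitary
  have hVVt : V * Vᵀ = 1 := hS.eigenvectorUnitary_mul_transpose
  obtain ⟨U, hU, hMV⟩ := exists_transpose_mul_self_eq_one_and_eq_mul_diagonal_sqrt
    (by simpa using hKN) (transpose_mul_mul_eigenvectorUnitary M hS)
  have hUVt : U * Vᵀ * V = U := by
    rw [Matrix.mul_assoc, hS.transpose_eigenvectorUnitary_mul_self, Matrix.mul_one]
  refine ⟨U * Vᵀ, ?_, ?_⟩
  · rw [transpose_mul, transpose_transpose, Matrix.mul_assoc, ← Matrix.mul_assoc Uᵀ, hU,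
      Matrix.one_mul, hVVt]
  · rw [← trace_transpose_mul_mul_of_mul_transpose_eq_one hVVt, hUVt, hMV, ← Matrix.mul_assoc,
      hU, Matrix.one_mul, trace_diagonal, nuclearNorm_eq_sum_sqrt_eigenvalues M hS]

theorem frobSq_eq_trace {n p : ℕ} (A : Matrix (Fin n) (Fin p) ℝ) : frobSq A = (Aᵀ * A).trace := by
  simp only [frobSq, trace, diag, mul_apply, transpose_apply, sq]
  exact Finset.sum_comm

theorem frobSq_sub_mul_transpose {N P K : ℕ} (X : Matrix (Fin N) (Fin P) ℝ)
    (L : Matrix (Fin P) (Fin K) ℝ) {Z : Matrix (Fin N) (Fin K) ℝ} (hZ : Zᵀ * Z = 1) :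
    frobSq (X - Z * Lᵀ) = (Xᵀ * X).trace + (Lᵀ * L).trace - 2 * (Zᵀ * (X * L)).trace := by
  have hcross : (Xᵀ * (Z * Lᵀ)).trace = (Zᵀ * (X * L)).trace := by
    rw [← trace_transpose, transpose_mul, transpose_mul, transpose_transpose, transpose_transpose,
      Matrix.mul_assoc, trace_mul_comm, Matrix.mul_assoc]
  have hquad : ((Z * Lᵀ)ᵀ * (Z * Lᵀ)).trace = (Lᵀ * L).trace := by
    rw [transpose_mul, transpose_transpose, Matrix.mul_assoc, ← Matrix.mul_assoc Zᵀ, hZ,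
      Matrix.one_mul, trace_mul_comm]
  rw [frobSq_eq_trace, transpose_sub, Matrix.sub_mul, Matrix.mul_sub, Matrix.mul_sub, trace_sub,
    trace_sub, trace_sub, hquad, hcross, ← trace_transpose ((Z * Lᵀ)ᵀ * X), transpose_mul,
    transpose_transpose, hcross]
  ring

/-- The minimum of `‖X - Z Lᵀ‖_F²` over `Z` with orthonormal columns equals
`tr(Xᵀ X) + tr(Lᵀ L) - 2 ‖X L‖_*`. -/
theorem stmt19 {N P K : ℕ} (hPN : P ≤ N) (hKP : K ≤ P)
    (X : Matrix (Fin N) (Fin P) ℝ) (L : Matrix (Fin P) (Fin K) ℝ) :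
    ∃ Z₀ : Matrix (Fin N) (Fin K) ℝ, Z₀.transpose * Z₀ = 1 ∧
      frobSq (X - Z₀ * L.transpose)
        = (X.transpose * X).trace + (L.transpose * L).trace - 2 * nuclearNorm (X * L) ∧
      ∀ Z : Matrix (Fin N) (Fin K) ℝ, Z.transpose * Z = 1 →
        (X.transpose * X).trace + (L.transpose * L).trace - 2 * nuclearNorm (X * L)
          ≤ frobSq (X - Z * L.transpose) := by
  obtain ⟨Z₀, hZ₀, htrace⟩ := exists_trace_transpose_mul_eq_nuclearNorm (hKP.trans hPN) (X * L)
  refine ⟨Z₀, hZ₀, by rw [frobSq_sub_mul_transpose X L hZ₀, htrace], fun Z hZ => ?_⟩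
  rw [frobSq_sub_mul_transpose X L hZ]
  linarith [trace_transpose_mul_le_nuclearNorm hZ (X * L)]
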